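/- Let G = (V, E, X) be a spatial graph with V finite, let θ ≥ 0, and let (R, A, k) be a similarity transformation of ℝ^p. Define transformed positions X'(v) = k·R(X(v)) + A. Then: (i) the thresholded subgraph sub((V,E,X'), kθ) equals sub((V,E,X), θ) as an abstract graph, so the hypernode partitions (connected components) of the two thresholded subgraphs coincide, and the induced super-edge relations between hypernodes coincide; and (ii) for every hypernode C, the average position of C computed from X' equals k·R applied to the average position of C computed from X, plus A. In other words, the spatial graph coarsening with average positioning is parameter equivariant under the similarity group action: ψ(f_θ(G), (R,A,k)) = f_{kθ}(ψ(G, (R,A,k))). -/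

import Mathlib

/-- The thresholded subgraph `sub(G, θ)` of a spatial graph `(V, E, X)`:
it keeps exactly the edges `(u,v) ∈ E` with `‖X u - X v‖ ≤ θ`. -/
def sub {p : ℕ} {V : Type*} (G : SimpleGraph V)
    (X : V → EuclideanSpace ℝ (Fin p)) (θ : ℝ) : SimpleGraph V where
  Adj u v := G.Adj u v ∧ ‖X u - X v‖ ≤ θ
  symm := by
    constructor
    intro u v h
    exact ⟨h.1.symm, by rw [norm_sub_rev]; exact h.2⟩
  loopless := ⟨fun v h => G.irrefl h.1⟩

/-- The hypernode containing `v` in the coarsening of `(V,E,X)` at scale `θ`: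
the connected component of `v` in the thresholded subgraph `sub(G, θ)`. -/
def hyperNode {p : ℕ} {V : Type*} (G : SimpleGraph V)
    (X : V → EuclideanSpace ℝ (Fin p)) (θ : ℝ) (v : V) : Set V :=
  {u | (sub G X θ).Reachable v u}

/-- The super-edge relation of the coarsened graph: two (distinct) hypernodes are
adjacent iff there is an original edge between a member of one and a member
of the other. -/
def superAdj {p : ℕ} {V : Type*} (G : SimpleGraph V)
    (X : V → EuclideanSpace ℝ (Fin p)) (θ : ℝ) (a b : V) : Prop :=
  hyperNode G X θ a ≠ hyperNode G X θ b ∧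
    ∃ u ∈ hyperNode G X θ a, ∃ v ∈ hyperNode G X θ b, G.Adj u v

/-! A similarity `x ↦ k • R x + A` multiplies every edge length by `k`, so thresholding the
transformed graph at `k * θ` keeps exactly the same edges; hypernodes and super-edges depend
only on the thresholded subgraph, hence are unchanged. Average positioning commutes with the
similarity because it is an affine map and the averaging weights sum to one. -/

theorem LinearIsometry.norm_smul_map_add_sub_smul_map_add {𝕜 E F : Type*} [NormedField 𝕜]
    [SeminormedAddCommGroup E] [SeminormedAddCommGroup F] [NormedSpace 𝕜 E] [NormedSpace 𝕜 F]
    (R : E →ₗᵢ[𝕜] F) (k : 𝕜) (A : F) (x y : E) :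
    ‖(k • R x + A) - (k • R y + A)‖ = ‖k‖ * ‖x - y‖ := by
  rw [add_sub_add_right_eq_sub, ← smul_sub, ← R.map_sub, norm_smul, R.norm_map]

theorem inv_card_smul_sum_map_add {𝕜 ι E F : Type*} [Field 𝕜] [CharZero 𝕜]
    [AddCommGroup E] [Module 𝕜 E] [AddCommGroup F] [Module 𝕜 F]
    (L : E →ₗ[𝕜] F) (A : F) {s : Finset ι} (hs : s.Nonempty) (x : ι → E) :
    (s.card : 𝕜)⁻¹ • ∑ i ∈ s, (L (x i) + A) =
      L ((s.card : 𝕜)⁻¹ • ∑ i ∈ s, x i) + A := by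
  have hcard : (s.card : 𝕜) ≠ 0 := Nat.cast_ne_zero.mpr hs.card_pos.ne'
  rw [Finset.sum_add_distrib, Finset.sum_const, ← Nat.cast_smul_eq_nsmul 𝕜, smul_add,
    smul_smul, inv_mul_cancel₀ hcard, one_smul, map_smul, map_sum]

section Coarsening

variable {p : ℕ} {V : Type*} (G : SimpleGraph V)

theorem sub_mul_eq_of_norm_sub_eq_mul {X X' : V → EuclideanSpace ℝ (Fin p)} {k : ℝ}
    (hk : 0 < k) (hX' : ∀ u v, ‖X' u - X' v‖ = k * ‖X u - X v‖) (θ : ℝ) :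
    sub G X' (k * θ) = sub G X θ := by
  ext u v
  simp only [sub, hX', mul_le_mul_iff_right₀ hk]

theorem hyperNode_eq_of_sub_eq {X X' : V → EuclideanSpace ℝ (Fin p)} {θ θ' : ℝ}
    (h : sub G X' θ' = sub G X θ) : hyperNode G X' θ' = hyperNode G X θ := by
  unfold hyperNode
  rw [h]

theorem superAdj_eq_of_sub_eq {X X' : V → EuclideanSpace ℝ (Fin p)} {θ θ' : ℝ}
    (h : sub G X' θ' = sub G X θ) : superAdj G X' θ' = superAdj G X θ := by
  unfold superAdj
  rw [hyperNode_eq_of_sub_eq G h]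

theorem mem_hyperNode_self (X : V → EuclideanSpace ℝ (Fin p)) (θ : ℝ) (v : V) :
    v ∈ hyperNode G X θ v :=
  SimpleGraph.Reachable.refl v

end Coarsening

theorem coarsening_average_positioning_equivariant_general {p : ℕ} {V : Type*} [Fintype V]
    (G : SimpleGraph V) (X : V → EuclideanSpace ℝ (Fin p)) (θ : ℝ)
    (R : EuclideanSpace ℝ (Fin p) ≃ₗᵢ[ℝ] EuclideanSpace ℝ (Fin p))
    (A : EuclideanSpace ℝ (Fin p)) (k : ℝ) (hk : 0 < k)
    (X' : V → EuclideanSpace ℝ (Fin p)) (hX' : ∀ v, X' v = k • R (X v) + A) :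
    -- (i) the thresholded subgraphs agree,
    sub G X' (k * θ) = sub G X θ ∧
    -- hence the hypernode partitions coincide,
    (∀ v, hyperNode G X' (k * θ) v = hyperNode G X θ v) ∧
    -- and the super-edge relations between hypernodes coincide;
    (∀ a b, superAdj G X' (k * θ) a b ↔ superAdj G X θ a b) ∧
    -- (ii) the average position of every hypernode transforms equivariantly.
    (∀ v,
      ((((Set.toFinite (hyperNode G X θ v)).toFinset.card : ℝ))⁻¹ •
          ∑ u ∈ (Set.toFinite (hyperNode G X θ v)).toFinset, X' u) =
        k • R ((((Set.toFinite (hyperNode G X θ v)).toFinset.card : ℝ))⁻¹ •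
          ∑ u ∈ (Set.toFinite (hyperNode G X θ v)).toFinset, X u) + A) := by
  have hnorm : ∀ u v, ‖X' u - X' v‖ = k * ‖X u - X v‖ := fun u v => by
    simpa only [← hX', LinearIsometryEquiv.coe_toLinearIsometry, Real.norm_of_nonneg hk.le] using
      R.toLinearIsometry.norm_smul_map_add_sub_smul_map_add k A (X u) (X v)
  have hsub := sub_mul_eq_of_norm_sub_eq_mul G hk hnorm θ
  refine ⟨hsub, congrFun (hyperNode_eq_of_sub_eq G hsub),
    fun a b => Iff.of_eq (congrFun₂ (superAdj_eq_of_sub_eq G hsub) a b), fun v => ?_⟩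
  have hne : (Set.toFinite (hyperNode G X θ v)).toFinset.Nonempty :=
    ⟨v, (Set.Finite.mem_toFinset _).mpr (mem_hyperNode_self G X θ v)⟩
  simp only [hX']
  exact inv_card_smul_sum_map_add (k • R.toLinearEquiv.toLinearMap) A hne X

/-- parameter equivariance of spatial graph coarsening with average
positioning under the similarity action `x ↦ k • R x + A`:
(i) `sub((V,E,X'), kθ) = sub((V,E,X), θ)`, the hypernode partitions (connected
components of the thresholded subgraphs) coincide, and the induced super-edge
relations coincide; (ii) for every hypernode `C`, the average position of `C`
computed from `X'` equals `k • R` applied to the average computed from `X`, plus `A`. -/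
theorem coarsening_average_positioning_equivariant {p : ℕ} {V : Type*} [Fintype V]
    (G : SimpleGraph V) (X : V → EuclideanSpace ℝ (Fin p)) (θ : ℝ) (hθ : 0 ≤ θ)
    (R : EuclideanSpace ℝ (Fin p) ≃ₗᵢ[ℝ] EuclideanSpace ℝ (Fin p))
    (A : EuclideanSpace ℝ (Fin p)) (k : ℝ) (hk : 0 < k)
    (X' : V → EuclideanSpace ℝ (Fin p)) (hX' : ∀ v, X' v = k • R (X v) + A) :
    -- (i) the thresholded subgraphs agree,
    sub G X' (k * θ) = sub G X θ ∧
    -- hence the hypernode partitions coincide,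
    (∀ v, hyperNode G X' (k * θ) v = hyperNode G X θ v) ∧
    -- and the super-edge relations between hypernodes coincide;
    (∀ a b, superAdj G X' (k * θ) a b ↔ superAdj G X θ a b) ∧
    -- (ii) the average position of every hypernode transforms equivariantly.
    (∀ v,
      ((((Set.toFinite (hyperNode G X θ v)).toFinset.card : ℝ))⁻¹ •
          ∑ u ∈ (Set.toFinite (hyperNode G X θ v)).toFinset, X' u) =
        k • R ((((Set.toFinite (hyperNode G X θ v)).toFinset.card : ℝ))⁻¹ •
          ∑ u ∈ (Set.toFinite (hyperNode G X θ v)).toFinset, X u) + A) :=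
  coarsening_average_positioning_equivariant_general G X θ R A k hk X' hX'
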